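/- The weak Lebesgue space embeds into Morrey–Campanato spaces: if 1 ≤ p < n/α and f ∈ L^{n/α,∞}(ℝ^n), then f ∈ 𝔏^{α,p}(ℝ^n) with ‖f‖_{𝔏^{α,p}} ≤ C ‖f‖_{L^{n/α,∞}}. -/

import Mathlib

/-!
Dyadic decomposition of the range gives, for every `λ > 0`,
`|f|^p ≤ λ^p + ∑ₖ (2^(k+1) λ)^p 𝟙{|f| > 2^k λ}`. If `|{|f| > t}| ≤ (w/t)^q` with `p < q`, integrating
over a set `E` yields a geometric series of ratio `2^(p-q) < 1`, hence
`∫_E |f|^p ≤ λ^p (|E| + C (w/λ)^q)`. On a cube of side `r` take `λ = w r^(-α)`: then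
`(w/λ)^q = r^(αq) = r^n = |Q|`, so `r^α (r^(-n) ∫_Q |f|^p)^(1/p) ≤ C' w`. Letting `w` decrease to
the weak norm removes the restriction `0 < w < ∞`.
-/

open MeasureTheory ENNReal Set

noncomputable section

def cube (n : ℕ) (x : Fin n → ℝ) (r : ℝ) : Set (Fin n → ℝ) :=
  {y | ∀ i, |y i - x i| ≤ r / 2}

/-- The Morrey–Campanato norm `𝔏^{α,p}` on ℝⁿ. -/
def morreyNormX (n : ℕ) (α p : ℝ) (f : (Fin n → ℝ) → ℝ≥0∞) : ℝ≥0∞ :=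
  ⨆ (x : Fin n → ℝ) (r : ℝ) (_ : 0 < r),
    ENNReal.ofReal (r ^ α) *
      ((ENNReal.ofReal (r ^ (n : ℕ)))⁻¹ * ∫⁻ y in cube n x r, (f y) ^ p) ^ (1 / p)

/-- The weak `L^q` quasi-norm on ℝⁿ. -/
def weakNorm (n : ℕ) (q : ℝ) (f : (Fin n → ℝ) → ℂ) : ℝ≥0∞ :=
  ⨆ (lam : ℝ) (_ : 0 < lam),
    ENNReal.ofReal lam *
      (volume {x : Fin n → ℝ | ENNReal.ofReal lam < (‖f x‖₊ : ℝ≥0∞)}) ^ (1 / q)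

open scoped NNReal

lemma exists_pow_lt_le_pow_succ {a b : ℝ} (ha : 1 < a) (hb : 1 < b) :
    ∃ k : ℕ, b ^ k < a ∧ a ≤ b ^ (k + 1) := by
  have hex : ∃ k : ℕ, a ≤ b ^ (k + 1) :=
    let ⟨k, hk⟩ := pow_unbounded_of_one_lt a hb
    ⟨k, hk.le.trans (pow_le_pow_right₀ hb.le k.le_succ)⟩
  refine ⟨Nat.find hex, ?_, Nat.find_spec hex⟩
  rcases h : Nat.find hex with _ | k
  · simpa using ha
  · exact lt_of_not_ge (Nat.find_min hex (h ▸ k.lt_succ_self))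

lemma two_pow_succ_mul_rpow_mul_div_rpow {p q lam w : ℝ} (hlam : 0 < lam) (hw : 0 ≤ w) (k : ℕ) :
    (2 ^ (k + 1) * lam) ^ p * (w / (2 ^ k * lam)) ^ q
      = lam ^ p * 2 ^ p * (w / lam) ^ q * (2 ^ (p - q)) ^ k := by
  have h2k (r : ℝ) : ((2 : ℝ) ^ k) ^ r = ((2 : ℝ) ^ r) ^ k := by
    rw [← Real.rpow_natCast, ← Real.rpow_mul zero_le_two, mul_comm, Real.rpow_mul zero_le_two,
      Real.rpow_natCast]
  rw [show (2 : ℝ) ^ (k + 1) * lam = 2 ^ k * 2 * lam by ring,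
    show w / (2 ^ k * lam) = w / lam / 2 ^ k by ring,
    Real.mul_rpow (by positivity) hlam.le, Real.mul_rpow (by positivity) zero_le_two,
    Real.div_rpow (by positivity) (by positivity), h2k, h2k, Real.rpow_sub two_pos, div_pow]
  field_simp

section Kolmogorov

variable {X : Type*} {p q : ℝ}

lemma coe_rpow_le_add_tsum_indicator {g : X → ℝ≥0} (hp : 0 < p) {lam : ℝ} (hlam : 0 < lam)
    {T : ℕ → Set X} (hT : ∀ k : ℕ, {x | ENNReal.ofReal (2 ^ k * lam) < g x} ⊆ T k) (x : X) :
    (g x : ℝ≥0∞) ^ p ≤ ENNReal.ofReal (lam ^ p)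
      + ∑' k : ℕ, ENNReal.ofReal ((2 ^ (k + 1) * lam) ^ p) * (T k).indicator 1 x := by
  rw [← ofReal_coe_nnreal, ENNReal.ofReal_rpow_of_nonneg (g x).coe_nonneg hp.le]
  rcases le_or_gt (g x : ℝ) lam with hle | hlt
  · exact le_add_right (ofReal_le_ofReal (Real.rpow_le_rpow (g x).coe_nonneg hle hp.le))
  obtain ⟨k, hk_lt, hk_le⟩ := exists_pow_lt_le_pow_succ ((one_lt_div hlam).2 hlt) one_lt_two
  rw [lt_div_iff₀ hlam] at hk_lt
  rw [div_le_iff₀ hlam] at hk_le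
  have hxT : x ∈ T k := hT k <| by
    rw [mem_ofPred_eq, ← ofReal_coe_nnreal]
    exact (ofReal_lt_ofReal_iff (hlam.trans hlt)).2 hk_lt
  refine le_add_left (le_trans ?_ (ENNReal.le_tsum k))
  rw [indicator_of_mem hxT, Pi.one_apply, mul_one]
  exact ofReal_le_ofReal (Real.rpow_le_rpow (g x).coe_nonneg hk_le hp.le)

variable [MeasurableSpace X] {μ : Measure X}

theorem setLIntegral_rpow_le_of_meas_lt_le {g : X → ℝ≥0} (hp : 0 < p) {w : ℝ} (hw : 0 ≤ w)
    (hg : ∀ t : ℝ, 0 < t → μ {x | ENNReal.ofReal t < g x} ≤ ENNReal.ofReal ((w / t) ^ q))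
    (s : Set X) {lam : ℝ} (hlam : 0 < lam) :
    ∫⁻ x in s, (g x : ℝ≥0∞) ^ p ∂μ ≤ ENNReal.ofReal (lam ^ p) * (μ s + ENNReal.ofReal (2 ^ p)
      * (1 - ENNReal.ofReal (2 ^ (p - q)))⁻¹ * ENNReal.ofReal ((w / lam) ^ q)) := by
  -- `g` need not be measurable: pass to measurable hulls of its level sets.
  set T : ℕ → Set X := fun k => toMeasurable μ {x | ENNReal.ofReal (2 ^ k * lam) < g x}
  have hT (k : ℕ) : MeasurableSet (T k) := measurableSet_toMeasurable _ _
  have hμT (k : ℕ) : μ (T k) ≤ ENNReal.ofReal ((w / (2 ^ k * lam)) ^ q) := by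
    rw [measure_toMeasurable]
    exact hg _ (by positivity)
  calc ∫⁻ x in s, (g x : ℝ≥0∞) ^ p ∂μ
      ≤ ∫⁻ x in s, (ENNReal.ofReal (lam ^ p)
          + ∑' k : ℕ, ENNReal.ofReal ((2 ^ (k + 1) * lam) ^ p) * (T k).indicator 1 x) ∂μ :=
        lintegral_mono (coe_rpow_le_add_tsum_indicator hp hlam fun k => subset_toMeasurable _ _)
    _ = ENNReal.ofReal (lam ^ p) * μ s
          + ∑' k : ℕ, ENNReal.ofReal ((2 ^ (k + 1) * lam) ^ p) * μ (T k ∩ s) := by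
        rw [lintegral_add_left measurable_const, setLIntegral_const,
          lintegral_tsum fun k => (measurable_one.indicator (hT k)).const_mul _ |>.aemeasurable]
        congr 1
        refine tsum_congr fun k => ?_
        rw [lintegral_const_mul _ (measurable_one.indicator (hT k)), lintegral_indicator_one (hT k),
          Measure.restrict_apply (hT k)]
    _ ≤ ENNReal.ofReal (lam ^ p) * μ s + ∑' k : ℕ, ENNReal.ofReal ((2 ^ (k + 1) * lam) ^ p)
          * ENNReal.ofReal ((w / (2 ^ k * lam)) ^ q) := by
        gcongr with k
        exact (measure_mono inter_subset_left).trans (hμT k)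
    _ = ENNReal.ofReal (lam ^ p) * μ s + ∑' k : ℕ, ENNReal.ofReal (lam ^ p)
          * ENNReal.ofReal (2 ^ p) * ENNReal.ofReal ((w / lam) ^ q)
          * ENNReal.ofReal (2 ^ (p - q)) ^ k := by
        congr 1
        refine tsum_congr fun k => ?_
        rw [← ofReal_mul (by positivity), two_pow_succ_mul_rpow_mul_div_rpow hlam hw,
          ofReal_mul (by positivity), ofReal_mul (by positivity), ofReal_mul (by positivity),
          ofReal_pow (by positivity)]
    _ = _ := by
        rw [ENNReal.tsum_mul_left, ENNReal.tsum_geometric]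
        ring

end Kolmogorov

lemma le_mul_of_forall_le_ofReal {a b C : ℝ≥0∞} (hC₀ : C ≠ 0) (hC : C ≠ ⊤)
    (h : ∀ w : ℝ, 0 < w → b ≤ ENNReal.ofReal w → a ≤ C * ENNReal.ofReal w) : a ≤ C * b := by
  rw [mul_comm, ← ENNReal.div_le_iff hC₀ hC]
  refine le_of_forall_gt_imp_ge_of_dense fun c hbc => ?_
  rcases eq_or_ne c ⊤ with rfl | hc
  · exact le_top
  rw [ENNReal.div_le_iff hC₀ hC, mul_comm, ← ofReal_toReal hc]
  exact h _ (toReal_pos (pos_of_gt hbc).ne' hc) ((ofReal_toReal hc).symm ▸ hbc.le)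

def kolmogorovConst (p q : ℝ) : ℝ≥0∞ :=
  1 + ENNReal.ofReal (2 ^ p) * (1 - ENNReal.ofReal (2 ^ (p - q)))⁻¹

lemma kolmogorovConst_ne_top {p q : ℝ} (hpq : p < q) : kolmogorovConst p q ≠ ⊤ := by
  refine add_ne_top.2 ⟨one_ne_top, mul_ne_top ofReal_ne_top (inv_ne_top.2 ?_)⟩
  rw [Ne, tsub_eq_zero_iff_le, not_le, ← ofReal_one, ofReal_lt_ofReal_iff one_pos]
  exact Real.rpow_lt_one_of_one_lt_of_neg one_lt_two (sub_neg.2 hpq)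

lemma cube_eq_closedBall (n : ℕ) (x : Fin n → ℝ) {r : ℝ} (hr : 0 ≤ r) :
    cube n x r = Metric.closedBall x (r / 2) := by
  ext y
  simp [cube, dist_pi_le_iff (by positivity : 0 ≤ r / 2), Real.dist_eq]

lemma volume_cube (n : ℕ) (x : Fin n → ℝ) {r : ℝ} (hr : 0 ≤ r) :
    volume (cube n x r) = ENNReal.ofReal (r ^ n) := by
  rw [cube_eq_closedBall n x hr, Real.volume_pi_closedBall x (by positivity), Fintype.card_fin,
    mul_div_cancel₀ _ two_ne_zero]

lemma volume_lt_le_of_weakNorm_le {n : ℕ} {q w : ℝ} (hq : 0 < q) (hw : 0 ≤ w)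
    {f : (Fin n → ℝ) → ℂ} (hf : weakNorm n q f ≤ ENNReal.ofReal w) {t : ℝ} (ht : 0 < t) :
    volume {x | ENNReal.ofReal t < ‖f x‖₊} ≤ ENNReal.ofReal ((w / t) ^ q) := by
  set S := {x | ENNReal.ofReal t < ‖f x‖₊}
  have hS : ENNReal.ofReal t * volume S ^ (1 / q) ≤ ENNReal.ofReal w :=
    (le_iSup₂ (f := fun t (_ : 0 < t) =>
      ENNReal.ofReal t * volume {x | ENNReal.ofReal t < ‖f x‖₊} ^ (1 / q)) t ht).trans hf
  rw [mul_comm, ← ENNReal.le_div_iff_mul_le (Or.inl (ofReal_pos.2 ht).ne') (Or.inl ofReal_ne_top)]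
    at hS
  calc volume S = (volume S ^ (1 / q)) ^ q := by
        rw [← rpow_mul, one_div_mul_cancel hq.ne', rpow_one]
    _ ≤ (ENNReal.ofReal w / ENNReal.ofReal t) ^ q := rpow_le_rpow hS hq.le
    _ = ENNReal.ofReal ((w / t) ^ q) := by
        rw [← ofReal_div_of_pos ht, ofReal_rpow_of_nonneg (by positivity) hq.le]

theorem morreyNormX_le_of_weakNorm_le {n : ℕ} {α p q w : ℝ} (hp : 0 < p) (hq : 0 < q)
    (hαq : α * q = n) (hw : 0 < w) {f : (Fin n → ℝ) → ℂ}
    (hf : weakNorm n q f ≤ ENNReal.ofReal w) :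
    morreyNormX n α p (fun x => ‖f x‖₊) ≤ kolmogorovConst p q ^ (1 / p) * ENNReal.ofReal w := by
  refine iSup₂_le fun x r => iSup_le fun hr => ?_
  set lam := w * r ^ (-α)
  have hlam : 0 < lam := by positivity
  have hwlam : (w / lam) ^ q = r ^ n := by
    rw [div_mul_cancel_left₀ hw.ne', Real.rpow_neg hr.le, inv_inv, ← Real.rpow_mul hr.le, hαq,
      Real.rpow_natCast]
  have hint : ∫⁻ y in cube n x r, (‖f y‖₊ : ℝ≥0∞) ^ p
      ≤ ENNReal.ofReal (lam ^ p) * kolmogorovConst p q * ENNReal.ofReal (r ^ n) := by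
    have := setLIntegral_rpow_le_of_meas_lt_le (μ := volume) (g := fun y => ‖f y‖₊) hp hw.le
      (fun t ht => volume_lt_le_of_weakNorm_le hq hw.le hf ht) (cube n x r) hlam
    rw [hwlam, volume_cube n x hr.le] at this
    exact this.trans_eq (by rw [kolmogorovConst]; ring)
  have hrlam : r ^ α * lam = w := by
    rw [mul_left_comm, ← Real.rpow_add hr, add_neg_cancel, Real.rpow_zero, mul_one]
  have hrn : ENNReal.ofReal (r ^ n) ≠ 0 := (ofReal_pos.2 (by positivity)).ne'
  calc ENNReal.ofReal (r ^ α)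
        * ((ENNReal.ofReal (r ^ n))⁻¹ * ∫⁻ y in cube n x r, (‖f y‖₊ : ℝ≥0∞) ^ p) ^ (1 / p)
      ≤ ENNReal.ofReal (r ^ α) * (ENNReal.ofReal (lam ^ p) * kolmogorovConst p q) ^ (1 / p) := by
        refine mul_le_mul_right (rpow_le_rpow ?_ (by positivity)) _
        calc _ ≤ (ENNReal.ofReal (r ^ n))⁻¹
              * (ENNReal.ofReal (lam ^ p) * kolmogorovConst p q * ENNReal.ofReal (r ^ n)) :=
              mul_le_mul_right hint _
          _ = _ := by rw [mul_comm, mul_assoc, ENNReal.mul_inv_cancel hrn ofReal_ne_top, mul_one]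
    _ = kolmogorovConst p q ^ (1 / p) * ENNReal.ofReal w := by
        rw [mul_rpow_of_nonneg _ _ (by positivity), ofReal_rpow_of_nonneg (by positivity)
          (by positivity), ← Real.rpow_mul hlam.le, mul_one_div_cancel hp.ne', Real.rpow_one,
          ← mul_assoc, ← ofReal_mul (by positivity), hrlam, mul_comm]

/-- `L^{n/α,∞}(ℝⁿ) ⊂ 𝔏^{α,p}(ℝⁿ)` for `1 ≤ p < n/α`. -/
theorem statement_3 (n : ℕ) (α p : ℝ) (hα : 0 < α) (hp : 1 ≤ p) (hp' : p < n / α) :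
    ∃ C : ℝ≥0∞, C < ⊤ ∧ ∀ f : (Fin n → ℝ) → ℂ,
      morreyNormX n α p (fun x => (‖f x‖₊ : ℝ≥0∞)) ≤ C * weakNorm n ((n : ℝ) / α) f := by
  have hp₀ : 0 < p := one_pos.trans_le hp
  have hK : kolmogorovConst p (n / α) ^ (1 / p) ≠ ⊤ :=
    rpow_ne_top_of_nonneg (by positivity) (kolmogorovConst_ne_top hp')
  have hK₀ : kolmogorovConst p (n / α) ^ (1 / p) ≠ 0 :=
    (rpow_pos (one_pos.trans_le le_self_add) (kolmogorovConst_ne_top hp')).ne'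
  refine ⟨_, hK.lt_top, fun f => le_mul_of_forall_le_ofReal hK₀ hK fun w hw hfw => ?_⟩
  exact morreyNormX_le_of_weakNorm_le hp₀ (hp₀.trans hp') (mul_div_cancel₀ _ hα.ne') hw hfw
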